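/- Most resolvents are super-regular: there exists a sequence (O_q) of subsets of the set J(X) of firmly nonexpansive maps on X, each ρ̂-open in J(X) and ρ̂-dense in J(X), such that every T ∈ ⋂_q O_q is super-regular. -/

import Mathlib

open RealInnerProductSpace Filter

variable {X : Type*} [NormedAddCommGroup X] [InnerProductSpace ℝ X] [CompleteSpace X]

/-- `T` is nonexpansive. -/
def Nonexpansive (T : X → X) : Prop := ∀ x y : X, ‖T x - T y‖ ≤ ‖x - y‖

/-- `T` is firmly nonexpansive. -/
def FirmlyNonexpansive (T : X → X) : Prop :=
  ∀ x y : X, ‖T x - T y‖ ^ 2 ≤ ⟪x - y, T x - T y⟫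

/-- `‖T₁ - T₂‖ₙ = sup_{‖x‖ ≤ n} ‖T₁ x - T₂ x‖`. -/
noncomputable def ballSup (T₁ T₂ : X → X) (n : ℕ) : ℝ :=
  sSup {r : ℝ | ∃ x : X, ‖x‖ ≤ (n : ℝ) ∧ r = ‖T₁ x - T₂ x‖}

/-- The metric `ρ` on nonexpansive maps. -/
noncomputable def rho (T₁ T₂ : X → X) : ℝ :=
  ∑' n : ℕ, (1 / 2 ^ (n + 1)) *
    (ballSup T₁ T₂ (n + 1) / (1 + ballSup T₁ T₂ (n + 1)))

/-- The metric `ρ̂` on firmly nonexpansive maps: `ρ̂(T₁,T₂) = ρ(2T₁ - Id, 2T₂ - Id)`. -/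
noncomputable def rhoHat (T₁ T₂ : X → X) : ℝ :=
  rho (fun x => (2 : ℝ) • T₁ x - x) (fun x => (2 : ℝ) • T₂ x - x)

/-- `T` is super-regular with limit point `xT`. -/
def SuperRegularAt (T : X → X) (xT : X) : Prop :=
  ∀ s : ℝ, 0 < s → ∀ ε : ℝ, 0 < ε → ∃ N : ℕ, ∀ n ≥ N, ∀ x : X, ‖x‖ ≤ s → ‖T^[n] x - xT‖ < ε

/-- `T` is super-regular. -/
def SuperRegular (T : X → X) : Prop := ∃ xT : X, SuperRegularAt T xT

/-- `T` is a (Banach) contraction. -/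
def Contraction (T : X → X) : Prop :=
  ∃ l : ℝ, 0 ≤ l ∧ l < 1 ∧ ∀ x y : X, ‖T x - T y‖ ≤ l * ‖x - y‖

/-!
`O q` consists of the firmly nonexpansive `T` for which, for some `z` and `N ≥ 1`, every iterate
`T^[n]` with `N ≤ n ≤ 2N` maps a ball of radius `‖z‖ + q + 1/(q+1)` around `0` into a ball around
`z` of radius `< 1/(q+1)` lying inside it. Composing iterates propagates this to all `n ≥ N`, so
for `T` in every `O q` the iterates are uniformly Cauchy on bounded sets and converge to a constant.
The condition involves finitely many iterates on a bounded set, and `ρ̂`-closeness is uniform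
closeness on bounded sets, so `O q` is open. It is dense: the strict contractions `(1 - γ) • T` lie
in every `O q` and tend to `T` as `γ → 0`.
-/

open Set Metric

section Nonexpansive

variable {E : Type*} [NormedAddCommGroup E]

theorem Nonexpansive.norm_iterate_le {T : E → E} (hT : Nonexpansive T) (x : E) (n : ℕ) :
    ‖T^[n] x‖ ≤ ‖x‖ + n * ‖T 0‖ := by
  induction n with
  | zero => simp
  | succ n ih =>
    rw [Function.iterate_succ_apply']
    calc ‖T (T^[n] x)‖ ≤ ‖T (T^[n] x) - T 0‖ + ‖T 0‖ := norm_le_norm_sub_add _ _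
      _ ≤ ‖T^[n] x‖ + ‖T 0‖ := by simpa using hT (T^[n] x) 0
      _ ≤ ‖x‖ + (n + 1 : ℕ) * ‖T 0‖ := by push_cast; linarith

theorem Nonexpansive.norm_iterate_sub_iterate_le {S T : E → E} (hS : Nonexpansive S) {x : E}
    {δ : ℝ} {k : ℕ} (h : ∀ j < k, ‖S (T^[j] x) - T (T^[j] x)‖ ≤ δ) :
    ‖S^[k] x - T^[k] x‖ ≤ k * δ := by
  induction k with
  | zero => simp
  | succ k ih =>
    rw [Function.iterate_succ_apply', Function.iterate_succ_apply']
    calc ‖S (S^[k] x) - T (T^[k] x)‖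
        ≤ ‖S (S^[k] x) - S (T^[k] x)‖ + ‖S (T^[k] x) - T (T^[k] x)‖ :=
          norm_sub_le_norm_sub_add_norm_sub _ _ _
      _ ≤ k * δ + δ :=
          add_le_add ((hS _ _).trans (ih fun j hj => h j (by omega))) (h k k.lt_succ_self)
      _ = (k + 1 : ℕ) * δ := by push_cast; ring

theorem ballSup_nonneg (T₁ T₂ : E → E) (n : ℕ) : 0 ≤ ballSup T₁ T₂ n :=
  Real.sSup_nonneg <| by rintro _ ⟨x, -, rfl⟩; exact norm_nonneg _

theorem ballSup_le {T₁ T₂ : E → E} {n : ℕ} {c : ℝ} (h : ∀ x : E, ‖x‖ ≤ n → ‖T₁ x - T₂ x‖ ≤ c) :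
    ballSup T₁ T₂ n ≤ c :=
  csSup_le ⟨_, 0, by simp, rfl⟩ <| by rintro _ ⟨x, hx, rfl⟩; exact h x hx

theorem Nonexpansive.norm_sub_le_ballSup {T₁ T₂ : E → E} (h₁ : Nonexpansive T₁)
    (h₂ : Nonexpansive T₂) {n : ℕ} {x : E} (hx : ‖x‖ ≤ n) : ‖T₁ x - T₂ x‖ ≤ ballSup T₁ T₂ n := by
  refine le_csSup ⟨2 * n + ‖T₁ 0 - T₂ 0‖, ?_⟩ ⟨x, hx, rfl⟩
  rintro _ ⟨y, hy, rfl⟩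
  have hsplit : T₁ y - T₂ y = (T₁ y - T₁ 0) - (T₂ y - T₂ 0) + (T₁ 0 - T₂ 0) := by abel
  calc ‖T₁ y - T₂ y‖ ≤ ‖T₁ y - T₁ 0‖ + ‖T₂ y - T₂ 0‖ + ‖T₁ 0 - T₂ 0‖ := by
        rw [hsplit]; exact (norm_add_le _ _).trans (by gcongr; exact norm_sub_le _ _)
    _ ≤ ‖y‖ + ‖y‖ + ‖T₁ 0 - T₂ 0‖ := by
        gcongr <;> simpa using ‹Nonexpansive _› y 0
    _ ≤ 2 * n + ‖T₁ 0 - T₂ 0‖ := by linarith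

theorem summable_rho_terms (T₁ T₂ : E → E) :
    Summable fun n : ℕ =>
      1 / 2 ^ (n + 1) * (ballSup T₁ T₂ (n + 1) / (1 + ballSup T₁ T₂ (n + 1))) := by
  refine summable_geometric_two.of_nonneg_of_le (fun n => ?_) (fun n => ?_)
  all_goals have hb := ballSup_nonneg T₁ T₂ (n + 1)
  · positivity
  · calc 1 / 2 ^ (n + 1) * (ballSup T₁ T₂ (n + 1) / (1 + ballSup T₁ T₂ (n + 1)))
        ≤ 1 / 2 ^ (n + 1) * 1 := by gcongr; rw [div_le_one (by positivity)]; linarith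
      _ ≤ (1 / 2) ^ n := by rw [mul_one, one_div_pow]; gcongr <;> norm_num

theorem rho_term_le_rho (T₁ T₂ : E → E) (n : ℕ) :
    1 / 2 ^ (n + 1) * (ballSup T₁ T₂ (n + 1) / (1 + ballSup T₁ T₂ (n + 1))) ≤ rho T₁ T₂ :=
  (summable_rho_terms T₁ T₂).le_tsum n fun j _ => by
    have := ballSup_nonneg T₁ T₂ (j + 1); positivity

theorem hasSum_add_one_add_div_two_pow (c : ℝ) :
    HasSum (fun n : ℕ => ((n : ℝ) + 1 + c) / 2 ^ (n + 1)) (2 + c) := by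
  have hlin : HasSum (fun n : ℕ => ((n + 1 : ℕ) : ℝ) * (1 / 2) ^ (n + 1)) 2 := by
    have h := (hasSum_nat_add_iff' 1).mpr
      (hasSum_coe_mul_geometric_of_norm_lt_one (r := (1 / 2 : ℝ)) (by norm_num))
    norm_num at h ⊢
    exact h
  convert hlin.add (hasSum_geometric_two' c) using 1
  funext n
  push_cast
  rw [one_div_pow]
  field_simp
  ring

theorem rho_le_of_norm_sub_le {T₁ T₂ : E → E} {a c : ℝ} (ha : 0 ≤ a)
    (h : ∀ x : E, ‖T₁ x - T₂ x‖ ≤ a * (‖x‖ + c)) : rho T₁ T₂ ≤ a * (2 + c) := by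
  refine hasSum_le (fun n => ?_) (summable_rho_terms T₁ T₂).hasSum
    ((hasSum_add_one_add_div_two_pow c).mul_left a)
  have hb := ballSup_nonneg T₁ T₂ (n + 1)
  have hbound : ballSup T₁ T₂ (n + 1) ≤ a * ((n : ℝ) + 1 + c) :=
    ballSup_le fun x hx => (h x).trans (by push_cast at hx; gcongr)
  calc 1 / 2 ^ (n + 1) * (ballSup T₁ T₂ (n + 1) / (1 + ballSup T₁ T₂ (n + 1)))
      ≤ 1 / 2 ^ (n + 1) * ballSup T₁ T₂ (n + 1) := by
        gcongr; exact div_le_self hb (by linarith)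
    _ ≤ 1 / 2 ^ (n + 1) * (a * ((n : ℝ) + 1 + c)) := by gcongr
    _ = a * (((n : ℝ) + 1 + c) / 2 ^ (n + 1)) := by ring

theorem exists_pos_forall_norm_sub_lt_of_rho_lt (R : ℝ) {η : ℝ} (hη : 0 < η) :
    ∃ r > (0 : ℝ), ∀ T₁ T₂ : E → E, Nonexpansive T₁ → Nonexpansive T₂ → rho T₁ T₂ < r →
      ∀ x : E, ‖x‖ ≤ R → ‖T₁ x - T₂ x‖ < η := by
  set m := ⌈R⌉₊
  refine ⟨1 / 2 ^ (m + 1) * (η / (1 + η)), by positivity, fun T₁ T₂ h₁ h₂ hρ x hx => ?_⟩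
  set b := ballSup T₁ T₂ (m + 1)
  have hb : 0 ≤ b := ballSup_nonneg T₁ T₂ (m + 1)
  have hfrac : b / (1 + b) < η / (1 + η) :=
    lt_of_mul_lt_mul_left ((rho_term_le_rho T₁ T₂ m).trans_lt hρ) (by positivity)
  rw [div_lt_div_iff₀ (by positivity) (by positivity)] at hfrac
  have hxm : ‖x‖ ≤ ((m + 1 : ℕ) : ℝ) := by push_cast; linarith [Nat.le_ceil R]
  linarith [h₁.norm_sub_le_ballSup h₂ hxm]

end Nonexpansive

section NormedSpace

variable {E : Type*} [NormedAddCommGroup E] [NormedSpace ℝ E]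

theorem reflection_sub_reflection (S T : E → E) (x : E) :
    (2 : ℝ) • S x - x - ((2 : ℝ) • T x - x) = (2 : ℝ) • (S x - T x) := by
  module

theorem Nonexpansive.contractingWith_const_smul {T : E → E} (hT : Nonexpansive T) {l : NNReal}
    (hl : l < 1) :
    ContractingWith l fun x => (l : ℝ) • T x := by
  refine ⟨hl, LipschitzWith.of_dist_le_mul fun x y => ?_⟩
  rw [dist_eq_norm, dist_eq_norm, ← smul_sub, norm_smul, NNReal.norm_eq]
  exact mul_le_mul_of_nonneg_left (hT x y) l.2

end NormedSpace

theorem mapsTo_iterate_of_window {α : Type*} {f : α → α} {s t : Set α} {N : ℕ} (hN : 0 < N)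
    (hts : t ⊆ s) (h : ∀ n, N ≤ n → n ≤ 2 * N → MapsTo f^[n] s t) :
    ∀ n, N ≤ n → MapsTo f^[n] s t := by
  intro n
  induction n using Nat.strong_induction_on with
  | _ n ih =>
    intro hn
    by_cases hn2 : n ≤ 2 * N
    · exact h n hn hn2
    · obtain ⟨m, rfl⟩ := Nat.exists_eq_add_of_le hn
      rw [Function.iterate_add]
      exact (h N le_rfl (by omega)).comp ((ih m (by omega) (by omega)).mono_right hts)

section NearlyRegular

variable {E : Type*} [NormedAddCommGroup E] {T : E → E}

/-- The domain radius `‖z‖ + r + ε` makes the target ball part of the domain, so the window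
`[N, 2N]` propagates to all `n ≥ N`. -/
def NearlyRegular (r ε : ℝ) (T : E → E) : Prop :=
  ∃ (z : E) (N : ℕ) (θ : ℝ), 0 < N ∧ θ < ε ∧
    ∀ n, N ≤ n → n ≤ 2 * N → MapsTo T^[n] (closedBall 0 (‖z‖ + r + ε)) (closedBall z θ)

theorem NearlyRegular.exists_forall_mapsTo {r ε : ℝ} (h : NearlyRegular r ε T) (hr : 0 ≤ r)
    (hε : 0 ≤ ε) :
    ∃ (z : E) (N : ℕ), ∀ n ≥ N, MapsTo T^[n] (closedBall 0 r) (closedBall z ε) := by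
  obtain ⟨z, N, θ, hN, hθ, hwin⟩ := h
  have hsub : closedBall z θ ⊆ closedBall 0 (‖z‖ + r + ε) := fun y hy => by
    rw [mem_closedBall, dist_eq_norm] at hy
    rw [mem_closedBall_zero_iff]
    linarith [norm_le_norm_sub_add y z]
  refine ⟨z, N, fun n hn => ?_⟩
  refine (mapsTo_iterate_of_window hN hsub hwin n hn).mono ?_ (closedBall_subset_closedBall hθ.le)
  exact closedBall_subset_closedBall (by linarith [norm_nonneg z])

theorem ContractingWith.nearlyRegular [CompleteSpace E] {K : NNReal} (hT : ContractingWith K T)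
    (r : ℝ) {ε : ℝ} (hε : 0 < ε) : NearlyRegular r ε T := by
  set z := ContractingWith.fixedPoint T hT
  set D := ‖z‖ + r + ε + ‖z‖
  have hsmall : ∀ᶠ n in atTop, (K : ℝ) ^ n * D < ε / 2 :=
    ((tendsto_pow_atTop_nhds_zero_of_lt_one K.2 hT.1).mul_const D).eventually_lt_const
      (by rw [zero_mul]; positivity)
  obtain ⟨N, hN⟩ := eventually_atTop.1 hsmall
  refine ⟨z, N + 1, ε / 2, N.succ_pos, by linarith, fun n hn _ x hx => ?_⟩
  rw [mem_closedBall_zero_iff] at hx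
  have hz : T^[n] z = z := (hT.fixedPoint_isFixedPt.iterate n).eq
  calc dist (T^[n] x) z = dist (T^[n] x) (T^[n] z) := by rw [hz]
    _ ≤ (K : ℝ) ^ n * dist x z := by
        simpa using (hT.toLipschitzWith.iterate n).dist_le_mul x z
    _ ≤ (K : ℝ) ^ n * D := by
        gcongr
        rw [dist_eq_norm]
        linarith [norm_sub_le x z]
    _ ≤ ε / 2 := (hN n (by omega)).le

/-- `T^[n] 0` is Cauchy, and its limit lies in every eventual target ball. -/
theorem superRegular_of_forall_mapsTo [CompleteSpace E]
    (h : ∀ s ε : ℝ, 0 < ε → ∃ (z : E) (N : ℕ), ∀ n ≥ N,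
      MapsTo T^[n] (closedBall 0 s) (closedBall z ε)) : SuperRegular T := by
  have h0 : (0 : E) ∈ closedBall 0 0 := mem_closedBall_self le_rfl
  have hcauchy : CauchySeq fun n => T^[n] 0 := by
    refine Metric.cauchySeq_iff'.2 fun ε hε => ?_
    obtain ⟨z, N, hN⟩ := h 0 (ε / 3) (by positivity)
    refine ⟨N, fun n hn => ?_⟩
    have h1 := hN n hn h0
    have h2 := hN N le_rfl h0
    rw [mem_closedBall] at h1 h2
    linarith [dist_triangle_right (T^[n] 0) (T^[N] 0) z]
  obtain ⟨xT, hxT⟩ := cauchySeq_tendsto_of_complete hcauchy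
  refine ⟨xT, fun s hs ε hε => ?_⟩
  obtain ⟨z, N, hN⟩ := h s (ε / 3) (by positivity)
  have hz : xT ∈ closedBall z (ε / 3) := isClosed_closedBall.mem_of_tendsto hxT
    (eventually_atTop.2 ⟨N, fun n hn => hN n hn (mem_closedBall_self hs.le)⟩)
  refine ⟨N, fun n hn x hx => ?_⟩
  have hx' := hN n hn (mem_closedBall_zero_iff.2 hx)
  rw [mem_closedBall] at hz hx'
  rw [← dist_eq_norm]
  linarith [dist_triangle_right (T^[n] x) xT z]

theorem superRegular_of_forall_nearlyRegular [CompleteSpace E]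
    (h : ∀ q : ℕ, NearlyRegular q (1 / (q + 1)) T) : SuperRegular T := by
  refine superRegular_of_forall_mapsTo fun s ε hε => ?_
  obtain ⟨k, hk⟩ := exists_nat_one_div_lt hε
  set q := k + ⌈s⌉₊
  obtain ⟨z, N, hN⟩ := (h q).exists_forall_mapsTo q.cast_nonneg (by positivity)
  refine ⟨z, N, fun n hn => (hN n hn).mono (closedBall_subset_closedBall ?_)
    (closedBall_subset_closedBall ?_)⟩
  · calc s ≤ ⌈s⌉₊ := Nat.le_ceil s
      _ ≤ q := by exact_mod_cast Nat.le_add_left _ _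
  · exact (Nat.one_div_le_one_div (Nat.le_add_right k _)).trans hk.le

end NearlyRegular

section FirmlyNonexpansive

variable {E : Type*} [NormedAddCommGroup E] [InnerProductSpace ℝ E] {S T : E → E}

theorem FirmlyNonexpansive.nonexpansive_reflection (hT : FirmlyNonexpansive T) :
    Nonexpansive fun x => (2 : ℝ) • T x - x := by
  intro x y
  have hsq : ‖(2 : ℝ) • (T x - T y) - (x - y)‖ ^ 2
      = 4 * (‖T x - T y‖ ^ 2 - ⟪x - y, T x - T y⟫) + ‖x - y‖ ^ 2 := by
    rw [norm_sub_sq_real, norm_smul, real_inner_smul_left, real_inner_comm]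
    norm_num
    ring
  have hdiff : (2 : ℝ) • T x - x - ((2 : ℝ) • T y - y) = (2 : ℝ) • (T x - T y) - (x - y) := by
    module
  rw [hdiff, ← sq_le_sq₀ (norm_nonneg _) (norm_nonneg _), hsq]
  linarith [hT x y]

/-- `T` is the average of the identity and its nonexpansive reflection `2T - Id`. -/
theorem FirmlyNonexpansive.nonexpansive (hT : FirmlyNonexpansive T) : Nonexpansive T := by
  intro x y
  have hmid : T x - T y = (1 / 2 : ℝ) • ((x - y) + ((2 : ℝ) • T x - x - ((2 : ℝ) • T y - y))) := by
    module
  rw [hmid, norm_smul]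
  have hreflect := hT.nonexpansive_reflection x y
  have htri := norm_add_le (x - y) ((2 : ℝ) • T x - x - ((2 : ℝ) • T y - y))
  norm_num
  linarith

theorem FirmlyNonexpansive.const_smul (hT : FirmlyNonexpansive T) {l : ℝ} (h0 : 0 ≤ l)
    (h1 : l ≤ 1) : FirmlyNonexpansive fun x => l • T x := by
  intro x y
  have hinner : 0 ≤ ⟪x - y, T x - T y⟫ := (sq_nonneg _).trans (hT x y)
  rw [← smul_sub, norm_smul, real_inner_smul_right, Real.norm_of_nonneg h0, mul_pow]
  calc l ^ 2 * ‖T x - T y‖ ^ 2 ≤ l ^ 2 * ⟪x - y, T x - T y⟫ := by gcongr; exact hT x y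
    _ ≤ l * ⟪x - y, T x - T y⟫ := by gcongr; nlinarith

theorem rhoHat_le_of_norm_sub_le {a c : ℝ} (ha : 0 ≤ a)
    (h : ∀ x : E, ‖S x - T x‖ ≤ a * (‖x‖ + c)) : rhoHat S T ≤ 2 * a * (2 + c) :=
  rho_le_of_norm_sub_le (by positivity) fun x => by
    rw [reflection_sub_reflection, norm_smul, Real.norm_ofNat, mul_assoc]
    gcongr
    exact h x

theorem exists_pos_forall_norm_sub_lt_of_rhoHat_lt (R : ℝ) {η : ℝ} (hη : 0 < η) :
    ∃ r > (0 : ℝ), ∀ S T : E → E, FirmlyNonexpansive S → FirmlyNonexpansive T →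
      rhoHat S T < r → ∀ x : E, ‖x‖ ≤ R → ‖S x - T x‖ < η := by
  obtain ⟨r, hr, hclose⟩ :=
    exists_pos_forall_norm_sub_lt_of_rho_lt (E := E) R (by positivity : 0 < 2 * η)
  refine ⟨r, hr, fun S T hS hT hST x hx => ?_⟩
  have := hclose _ _ hS.nonexpansive_reflection hT.nonexpansive_reflection hST x hx
  rw [reflection_sub_reflection, norm_smul, Real.norm_ofNat] at this
  linarith

theorem FirmlyNonexpansive.exists_contractingWith_rhoHat_lt (hT : FirmlyNonexpansive T)
    {ε : ℝ} (hε : 0 < ε) :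
    ∃ S, FirmlyNonexpansive S ∧ (∃ K, ContractingWith K S) ∧ rhoHat S T < ε := by
  obtain ⟨γ, hγ, hγε⟩ := exists_pos_mul_lt hε (2 * (2 + ‖T 0‖))
  set δ := min γ 1
  have hδ : 0 < δ := lt_min hγ one_pos
  set l : NNReal := ⟨1 - δ, by linarith [min_le_right γ 1]⟩
  have hl : (l : ℝ) = 1 - δ := rfl
  have hl1 : l < 1 := by rw [← NNReal.coe_lt_coe, hl, NNReal.coe_one]; linarith
  refine ⟨_, hT.const_smul l.2 (by linarith),
    ⟨l, hT.nonexpansive.contractingWith_const_smul hl1⟩, ?_⟩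
  have hclose : ∀ x, ‖(l : ℝ) • T x - T x‖ ≤ δ * (‖x‖ + ‖T 0‖) := fun x => by
    rw [hl, show (1 - δ) • T x - T x = -(δ • T x) by module, norm_neg, norm_smul,
      Real.norm_of_nonneg hδ.le]
    gcongr
    simpa using hT.nonexpansive.norm_iterate_le x 1
  calc rhoHat _ T ≤ 2 * δ * (2 + ‖T 0‖) := rhoHat_le_of_norm_sub_le hδ.le hclose
    _ ≤ 2 * (2 + ‖T 0‖) * γ := by nlinarith [min_le_left γ 1, norm_nonneg (T 0)]
    _ < ε := hγε


theorem FirmlyNonexpansive.exists_pos_nearlyRegular_of_rhoHat_lt {r ε : ℝ}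
    (hT : FirmlyNonexpansive T) (h : NearlyRegular r ε T) :
    ∃ ρ₀ > (0 : ℝ), ∀ S, FirmlyNonexpansive S → rhoHat S T < ρ₀ → NearlyRegular r ε S := by
  obtain ⟨z, N, θ, hN, hθ, hwin⟩ := h
  set R := ‖z‖ + r + ε
  set δ := (ε - θ) / (2 * N + 1)
  have hδ : 0 < δ := div_pos (by linarith) (by positivity)
  have hθδ : θ + 2 * N * δ < ε := by
    have : (2 * N + 1) * δ = ε - θ := mul_div_cancel₀ _ (by positivity)
    linarith
  obtain ⟨ρ₀, hρ₀, hclose⟩ :=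
    exists_pos_forall_norm_sub_lt_of_rhoHat_lt (E := E) (R + 2 * N * ‖T 0‖) hδ
  refine ⟨ρ₀, hρ₀, fun S hS hST => ⟨z, N, θ + 2 * N * δ, hN, hθδ, fun n hn hn2 x hx => ?_⟩⟩
  have hn2' : (n : ℝ) ≤ 2 * N := by exact_mod_cast hn2
  have hdrift : ‖S^[n] x - T^[n] x‖ ≤ n * δ := by
    refine hS.nonexpansive.norm_iterate_sub_iterate_le fun j hj => (hclose S T hS hT hST _ ?_).le
    have hj' : (j : ℝ) ≤ 2 * N := by exact_mod_cast (hj.le.trans hn2)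
    calc ‖T^[j] x‖ ≤ ‖x‖ + j * ‖T 0‖ := hT.nonexpansive.norm_iterate_le x j
      _ ≤ R + 2 * N * ‖T 0‖ := by gcongr; exact mem_closedBall_zero_iff.1 hx
  have hTn := hwin n hn hn2 hx
  rw [mem_closedBall] at hTn ⊢
  calc dist (S^[n] x) z ≤ dist (S^[n] x) (T^[n] x) + dist (T^[n] x) z := dist_triangle _ _ _
    _ ≤ 2 * N * δ + θ := by rw [dist_eq_norm]; gcongr; exact hdrift.trans (by gcongr)
    _ = θ + 2 * N * δ := by ring

end FirmlyNonexpansive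

/-- most firmly nonexpansive maps (resolvents) are super-regular. -/
theorem generic_superRegular_resolvent :
    ∃ O : ℕ → Set (X → X),
      (∀ q, O q ⊆ {T : X → X | FirmlyNonexpansive T}) ∧
      (∀ q, ∀ T ∈ O q, ∃ r > (0 : ℝ), ∀ S : X → X, FirmlyNonexpansive S → rhoHat S T < r → S ∈ O q) ∧
      (∀ q, ∀ T : X → X, FirmlyNonexpansive T → ∀ ε : ℝ, 0 < ε → ∃ S ∈ O q, rhoHat S T < ε) ∧
      (∀ T ∈ ⋂ q, O q, SuperRegular T) := by
  refine ⟨fun q => {T | FirmlyNonexpansive T ∧ NearlyRegular q (1 / (q + 1)) T},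
    fun q T hT => hT.1, ?_, ?_, ?_⟩
  · rintro q T ⟨hT, hreg⟩
    obtain ⟨ρ₀, hρ₀, hnear⟩ := hT.exists_pos_nearlyRegular_of_rhoHat_lt hreg
    exact ⟨ρ₀, hρ₀, fun S hS hST => ⟨hS, hnear S hS hST⟩⟩
  · intro q T hT ε hε
    obtain ⟨S, hS, ⟨K, hK⟩, hST⟩ := hT.exists_contractingWith_rhoHat_lt hε
    exact ⟨S, ⟨hS, hK.nearlyRegular q (by positivity)⟩, hST⟩
  · intro T hT
    exact superRegular_of_forall_nearlyRegular fun q => (mem_iInter.1 hT q).2
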